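/- arXiv:1108.3628 — 2 statements merged into one kernel-verified Lean document; each statement's English description precedes it below -/
import Mathlib

section
/- Let α = [0; b₁, b₂, ...] with bₖ ≥ 2 for infinitely many k. Then liminf_{k→∞}(1 + tₖvₖ) ≤ 3 − √3. -/
open Filter

noncomputable def cfFin : List ℕ → ℝ
  | [] => 0
  | a :: l => 1 / ((a : ℝ) + cfFin l)

noncomputable def cfInf (a : ℕ → ℕ) : ℝ :=
  limUnder Filter.atTop (fun n => cfFin (List.ofFn (fun i : Fin n => a i)))

/-- forward tail: `cfT a k = [0; b_{k+1}, b_{k+2}, …]` where `bᵢ = a (i-1)`. -/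
noncomputable def cfT (a : ℕ → ℕ) (k : ℕ) : ℝ := cfInf (fun n => a (n + k))

/-- backward tail: `cfV a k = [0; b_k, …, b_1]`. -/
noncomputable def cfV (a : ℕ → ℕ) (k : ℕ) : ℝ := cfFin ((List.range k).reverse.map a)

def cfQ (a : ℕ → ℕ) : ℕ → ℕ
  | 0 => 1
  | 1 => a 0
  | (k + 2) => a (k + 1) * cfQ a (k + 1) + cfQ a k

def cfP (a : ℕ → ℕ) : ℕ → ℕ
  | 0 => 0
  | 1 => 1
  | (k + 2) => a (k + 1) * cfP a (k + 1) + cfP a k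

noncomputable def cfA : List ℕ → ℝ → ℝ
  | [], x => x
  | a :: l, x => 1 / ((a : ℝ) + cfA l x)

lemma cfA_nonneg : ∀ (l : List ℕ) {x : ℝ}, 0 ≤ x → 0 ≤ cfA l x
  | [], x, hx => hx
  | a :: l, x, hx => by
    have h := cfA_nonneg l hx
    simp only [cfA]
    have : (0:ℝ) ≤ (a:ℝ) + cfA l x := by positivity
    positivity

lemma cfFin_eq_cfA : ∀ l : List ℕ, cfFin l = cfA l 0
  | [] => rfl
  | a :: l => by simp only [cfFin, cfA, cfFin_eq_cfA l]

lemma cfFin_nonneg (l : List ℕ) : 0 ≤ cfFin l := by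
  rw [cfFin_eq_cfA]; exact cfA_nonneg l le_rfl

lemma cfA_append (l : List ℕ) (m : ℕ) (x : ℝ) :
    cfA (l ++ [m]) x = cfA l (1 / ((m:ℝ) + x)) := by
  induction l with
  | nil => rfl
  | cons b l ih => 
    have ih' : cfA (l.append [m]) x = cfA l (1 / ((m:ℝ) + x)) := ih
    simp only [List.cons_append, cfA]
    rw [ih]

lemma step_abs {A x y : ℝ} (hA : 1 ≤ A) (hx : 0 ≤ x) (hy : 0 ≤ y) :
    |1/(A+x) - 1/(A+y)| = |x - y| / ((A+x)*(A+y)) := by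
  have h1 : (0:ℝ) < A + x := by linarith
  have h2 : (0:ℝ) < A + y := by linarith
  have e : 1/(A+x) - 1/(A+y) = (y - x)/((A+x)*(A+y)) := by
    field_simp
    ring
  have h3 : |(A+x)*(A+y)| = (A+x)*(A+y) := abs_of_pos (by positivity)
  rw [e, abs_div, h3, abs_sub_comm y x]

lemma cfA_lip : ∀ (l : List ℕ), (∀ b ∈ l, 1 ≤ b) → ∀ x y : ℝ, 0 ≤ x → 0 ≤ y →
    |cfA l x - cfA l y| ≤ 2 * (1/2)^l.length * |x - y|
  | [], _, x, y, hx, hy => by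
    simp only [cfA, List.length_nil, pow_zero, mul_one]
    nlinarith [abs_nonneg (x - y)]
  | [a], hmem, x, y, hx, hy => by
    have ha : 1 ≤ (a:ℝ) := by exact_mod_cast hmem a (by simp)
    simp only [cfA, List.length_cons, List.length_nil]
    rw [step_abs ha hx hy]
    have hd : 1 ≤ ((a:ℝ)+x)*((a:ℝ)+y) := by nlinarith
    have h := div_le_self (abs_nonneg (x - y)) hd
    have h2 : 2 * ((1:ℝ)/2)^(1:ℕ) * |x - y| = |x - y| := by norm_num
    rw [h2]
    exact h
  | a :: b :: l, hmem, x, y, hx, hy => by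
    have ha : 1 ≤ (a:ℝ) := by exact_mod_cast hmem a (by simp)
    have hb : 1 ≤ (b:ℝ) := by exact_mod_cast hmem b (by simp)
    have hmem' : ∀ c ∈ l, 1 ≤ c := fun c hc => hmem c (by simp [hc])
    set X := cfA l x with hXdef
    set Y := cfA l y with hYdef
    have hX : 0 ≤ X := cfA_nonneg l hx
    have hY : 0 ≤ Y := cfA_nonneg l hy
    have ih := cfA_lip l hmem' x y hx hy
    have hbX : (0:ℝ) < (b:ℝ) + X := by linarith
    have hbY : (0:ℝ) < (b:ℝ) + Y := by linarith
    set P := 1/((b:ℝ)+X) with hPdef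
    set Q := 1/((b:ℝ)+Y) with hQdef
    have hP0 : 0 < P := by positivity
    have hQ0 : 0 < Q := by positivity
    have e1 : |P - Q| = |X - Y| / (((b:ℝ)+X)*((b:ℝ)+Y)) := step_abs hb hX hY
    have hcfa : cfA (a :: b :: l) x = 1/((a:ℝ)+P) := by
      simp only [cfA, hPdef, hXdef]
    have hcfa' : cfA (a :: b :: l) y = 1/((a:ℝ)+Q) := by
      simp only [cfA, hQdef, hYdef]
    have e2 : |1/((a:ℝ)+P) - 1/((a:ℝ)+Q)| = |P - Q| / (((a:ℝ)+P)*((a:ℝ)+Q)) :=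
      step_abs ha hP0.le hQ0.le
    have hPbX : P * ((b:ℝ)+X) = 1 := by
      rw [hPdef]; field_simp
    have hQbY : Q * ((b:ℝ)+Y) = 1 := by
      rw [hQdef]; field_simp
    have key : 4 ≤ (((a:ℝ)+P)*((a:ℝ)+Q)) * (((b:ℝ)+X)*((b:ℝ)+Y)) := by
      have h1 : 2 ≤ ((a:ℝ)+P) * ((b:ℝ)+X) := by nlinarith
      have h2 : 2 ≤ ((a:ℝ)+Q) * ((b:ℝ)+Y) := by nlinarith
      nlinarith
    rw [hcfa, hcfa', e2, e1]
    have habs : 0 ≤ |X - Y| := abs_nonneg _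
    have hden1 : 0 < ((a:ℝ)+P)*((a:ℝ)+Q) := by positivity
    have hden2 : 0 < ((b:ℝ)+X)*((b:ℝ)+Y) := by positivity
    have step : |X - Y| / (((b:ℝ)+X)*((b:ℝ)+Y)) / (((a:ℝ)+P)*((a:ℝ)+Q))
        = |X - Y| / ((((a:ℝ)+P)*((a:ℝ)+Q)) * (((b:ℝ)+X)*((b:ℝ)+Y))) := by
      rw [div_div]; ring_nf
    rw [step]
    have h4 : |X - Y| / ((((a:ℝ)+P)*((a:ℝ)+Q)) * (((b:ℝ)+X)*((b:ℝ)+Y))) ≤ |X - Y| / 4 := by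
      gcongr
    have hlen : (a :: b :: l).length = l.length + 2 := by simp
    calc |X - Y| / ((((a:ℝ)+P)*((a:ℝ)+Q)) * (((b:ℝ)+X)*((b:ℝ)+Y))) ≤ |X - Y| / 4 := h4
      _ ≤ (2 * (1/2)^l.length * |x - y|) / 4 := by gcongr
      _ = 2 * (1/2)^(a :: b :: l).length * |x - y| := by
          rw [hlen]; ring

section
variable {a : ℕ → ℕ}

lemma mem_ofFn_one (ha : ∀ n, 1 ≤ a n) (k n : ℕ) :
    ∀ b ∈ List.ofFn (fun i : Fin n => a (↑i + k)), 1 ≤ b := by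
  intro b hb
  rw [List.mem_ofFn] at hb
  obtain ⟨i, rfl⟩ := hb
  exact ha _

lemma cfS_dist (ha : ∀ n, 1 ≤ a n) (k n : ℕ) :
    dist (cfFin (List.ofFn fun i : Fin n => a (↑i + k)))
      (cfFin (List.ofFn fun i : Fin (n+1) => a (↑i + k))) ≤ 2 * (1/2)^n := by
  have hsplit : (List.ofFn fun i : Fin (n+1) => a (↑i + k))
      = (List.ofFn fun i : Fin n => a (↑i + k)) ++ [a (n + k)] := by
    rw [List.ofFn_succ']
    simp [List.concat_eq_append]
  have hA : (0:ℝ) < (a (n+k) : ℝ) := by exact_mod_cast Nat.lt_of_lt_of_le Nat.zero_lt_one (ha _)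
  have h1 : (0:ℝ) ≤ 1 / ((a (n+k):ℝ) + 0) := by positivity
  have h2 : 1 / ((a (n+k):ℝ) + 0) ≤ 1 := by
    rw [add_zero, div_le_one hA]
    exact_mod_cast ha _
  rw [hsplit, Real.dist_eq, cfFin_eq_cfA, cfFin_eq_cfA, cfA_append]
  calc |cfA (List.ofFn fun i : Fin n => a (↑i + k)) 0
        - cfA (List.ofFn fun i : Fin n => a (↑i + k)) (1 / ((a (n+k):ℝ) + 0))|
      ≤ 2 * (1/2)^(List.ofFn fun i : Fin n => a (↑i + k)).length
        * |0 - 1 / ((a (n+k):ℝ) + 0)| :=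
        cfA_lip _ (mem_ofFn_one ha k n) _ _ le_rfl h1
    _ ≤ 2 * (1/2)^n * 1 := by
        rw [List.length_ofFn]
        gcongr
        rw [zero_sub, abs_neg, abs_of_nonneg h1]; exact h2
    _ = 2 * (1/2)^n := by ring

lemma cfT_tendsto (ha : ∀ n, 1 ≤ a n) (k : ℕ) :
    Filter.Tendsto (fun n => cfFin (List.ofFn fun i : Fin n => a (↑i + k)))
      Filter.atTop (nhds (cfT a k)) := by
  have hc : CauchySeq (fun n => cfFin (List.ofFn fun i : Fin n => a (↑i + k))) :=
    cauchySeq_of_le_geometric (1/2) 2 (by norm_num) (cfS_dist ha k)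
  obtain ⟨L, hL⟩ := cauchySeq_tendsto_of_complete hc
  have he : cfT a k = L := hL.limUnder_eq
  rw [he]; exact hL

lemma cfT_nonneg (ha : ∀ n, 1 ≤ a n) (k : ℕ) : 0 ≤ cfT a k :=
  ge_of_tendsto' (cfT_tendsto ha k) (fun n => cfFin_nonneg _)

lemma cfT_rec (ha : ∀ n, 1 ≤ a n) (k : ℕ) :
    cfT a k = 1 / ((a k : ℝ) + cfT a (k+1)) := by
  have h1 : Filter.Tendsto (fun n => cfFin (List.ofFn fun i : Fin (n+1) => a (↑i + k)))
      Filter.atTop (nhds (cfT a k)) :=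
    (cfT_tendsto ha k).comp (tendsto_add_atTop_nat 1)
  have heq : ∀ n, cfFin (List.ofFn fun i : Fin (n+1) => a (↑i + k))
      = 1 / ((a k : ℝ) + cfFin (List.ofFn fun i : Fin n => a (↑i + (k+1)))) := by
    intro n
    have hl : (List.ofFn fun i : Fin (n+1) => a (↑i + k))
        = a k :: (List.ofFn fun i : Fin n => a (↑i + (k+1))) := by
      rw [List.ofFn_succ]
      congr 1
      · simp
      · have hf : (fun i : Fin n => a (↑i.succ + k)) = fun i : Fin n => a (↑i + (k+1)) := by
          funext i
          congr 1
          simp only [Fin.val_succ]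
          omega
        rw [hf]
    rw [hl, cfFin]
  have hpos : (0:ℝ) < (a k : ℝ) + cfT a (k+1) := by
    have h1' : (1:ℝ) ≤ (a k : ℝ) := by exact_mod_cast ha k
    have := cfT_nonneg ha (k+1)
    linarith
  have h3 : Filter.Tendsto (fun n => 1 / ((a k : ℝ) + cfFin (List.ofFn fun i : Fin n => a (↑i + (k+1)))))
      Filter.atTop (nhds (1 / ((a k : ℝ) + cfT a (k+1)))) :=
    tendsto_const_nhds.div (tendsto_const_nhds.add (cfT_tendsto ha (k+1))) hpos.ne'
  simp_rw [heq] at h1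
  exact tendsto_nhds_unique h1 h3

lemma cfT_le_one (ha : ∀ n, 1 ≤ a n) (k : ℕ) : cfT a k ≤ 1 := by
  rw [cfT_rec ha k]
  have h1' : (1:ℝ) ≤ (a k : ℝ) := by exact_mod_cast ha k
  have h2 := cfT_nonneg ha (k+1)
  rw [div_le_one (by linarith)]
  linarith

lemma cfT_pos (ha : ∀ n, 1 ≤ a n) (k : ℕ) : 0 < cfT a k := by
  rw [cfT_rec ha k]
  have h1' : (1:ℝ) ≤ (a k : ℝ) := by exact_mod_cast ha k
  have h2 := cfT_nonneg ha (k+1)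
  positivity

lemma cfV_succ (k : ℕ) : cfV a (k+1) = 1 / ((a k : ℝ) + cfV a k) := by
  have hl : ((List.range (k+1)).reverse.map a) = a k :: ((List.range k).reverse.map a) := by
    rw [List.range_succ, List.reverse_append]
    simp
  unfold cfV
  rw [hl, cfFin]

lemma cfV_nonneg (k : ℕ) : 0 ≤ cfV a k := cfFin_nonneg _

lemma cfV_le_one (ha : ∀ n, 1 ≤ a n) (k : ℕ) : cfV a k ≤ 1 := by
  cases k with
  | zero => norm_num [cfV, cfFin]
  | succ k =>
    rw [cfV_succ]
    have h1' : (1:ℝ) ≤ (a k : ℝ) := by exact_mod_cast ha k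
    have h2 := cfV_nonneg (a := a) k
    rw [div_le_one (by linarith)]
    linarith

end


section
variable {a : ℕ → ℕ}

lemma pair_lemma (ha : ∀ n, 1 ≤ a n) {N k : ℕ} (hk : N ≤ k)
    (hall : ∀ m, N ≤ m → 2 - Real.sqrt 3 < cfT a m * cfV a m) (h2k : 2 ≤ a k) :
    a k = 2 ∧ Real.sqrt 3 - 1 < cfT a (k+1) ∧ Real.sqrt 3 - 1 < cfV a k := by
  set s := Real.sqrt 3 with hsdef
  have hs : s^2 = 3 := Real.sq_sqrt (by norm_num)
  have hs0 : (0:ℝ) ≤ s := Real.sqrt_nonneg 3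
  have hsl : (1.7:ℝ) < s := by nlinarith
  have hsu : s < (1.8:ℝ) := by nlinarith
  set u := cfT a (k+1) with hu
  set w := cfV a k with hw
  have hu0 : 0 ≤ u := cfT_nonneg ha (k+1)
  have hu1 : u ≤ 1 := cfT_le_one ha (k+1)
  have hw0 : 0 ≤ w := cfV_nonneg k
  have hw1 : w ≤ 1 := cfV_le_one ha k
  have hb : (2:ℝ) ≤ (a k : ℝ) := by exact_mod_cast h2k
  have htk : cfT a k = 1 / ((a k:ℝ) + u) := cfT_rec ha k
  have hvk1 : cfV a (k+1) = 1 / ((a k:ℝ) + w) := cfV_succ k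
  have hden1 : (0:ℝ) < (a k:ℝ) + u := by linarith
  have hden2 : (0:ℝ) < (a k:ℝ) + w := by linarith
  have hx1 : 2 - s < (1/((a k:ℝ)+u)) * w := by
    rw [← htk]; exact hall k hk
  have hx2 : 2 - s < u * (1/((a k:ℝ)+w)) := by
    have h := hall (k+1) (le_trans hk (Nat.le_succ k))
    rw [hvk1] at h
    exact h
  have hc0 : (0:ℝ) < 2 - s := by linarith
  have e1 : (1/((a k:ℝ)+u)) * w * ((a k:ℝ)+u) = w := by field_simp
  have hX1 : (2-s)*((a k:ℝ)+u) < w := by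
    have h := mul_lt_mul_of_pos_right hx1 hden1
    rwa [e1] at h
  have e2 : u * (1/((a k:ℝ)+w)) * ((a k:ℝ)+w) = u := by field_simp
  have hX2 : (2-s)*((a k:ℝ)+w) < u := by
    have h := mul_lt_mul_of_pos_right hx2 hden2
    rwa [e2] at h
  have hak : a k = 2 := by
    by_contra hne
    have h3 : 3 ≤ a k := by omega
    have hb3 : (3:ℝ) ≤ (a k : ℝ) := by exact_mod_cast h3
    nlinarith [mul_lt_mul_of_pos_left hX2 hc0, hX1, hs, hw1]
  have hbe : ((a k : ℝ)) = 2 := by rw [hak]; norm_num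
  rw [hbe] at hX1 hX2
  have hwd : s - 1 < w := by
    nlinarith [mul_lt_mul_of_pos_left hX2 hc0, hX1, hs]
  have hud : s - 1 < u := by nlinarith [hX2, hs]
  exact ⟨hak, hud, hwd⟩

lemma forced_lemma (ha : ∀ n, 1 ≤ a n) {N k : ℕ} (hk : N ≤ k)
    (hall : ∀ m, N ≤ m → 2 - Real.sqrt 3 < cfT a m * cfV a m) (h2k : 2 ≤ a k) :
    a (k+1) = 1 ∧ 2 ≤ a (k+2) := by
  set s := Real.sqrt 3 with hsdef
  have hs : s^2 = 3 := Real.sq_sqrt (by norm_num)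
  have hs0 : (0:ℝ) ≤ s := Real.sqrt_nonneg 3
  have hsl : (1.7:ℝ) < s := by nlinarith
  have hsu : s < (1.8:ℝ) := by nlinarith
  obtain ⟨hak, hud, hwd⟩ := pair_lemma ha hk hall h2k
  set u := cfT a (k+1) with hu
  set t2 := cfT a (k+2) with ht2
  set t3 := cfT a (k+3) with ht3
  have ht20 : 0 ≤ t2 := cfT_nonneg ha (k+2)
  have ht21 : t2 ≤ 1 := cfT_le_one ha (k+2)
  have ht30 : 0 ≤ t3 := cfT_nonneg ha (k+3)
  have ht31 : t3 ≤ 1 := cfT_le_one ha (k+3)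
  have hrec1 : u = 1 / ((a (k+1):ℝ) + t2) := cfT_rec ha (k+1)
  have hrec2 : t2 = 1 / ((a (k+2):ℝ) + t3) := cfT_rec ha (k+2)
  have hak1 : a (k+1) = 1 := by
    by_contra hne
    have h2' : 2 ≤ a (k+1) := by have := ha (k+1); omega
    have hA : (2:ℝ) ≤ (a (k+1):ℝ) := by exact_mod_cast h2'
    have hden : (0:ℝ) < (a (k+1):ℝ) + t2 := by linarith
    have hle : u ≤ 1/2 := by
      rw [hrec1]
      rw [div_le_div_iff₀ hden (by norm_num)]
      linarith
    linarith
  have hA1 : ((a (k+1):ℝ)) = 1 := by rw [hak1]; norm_num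
  rw [hA1] at hrec1
  have hden : (0:ℝ) < 1 + t2 := by linarith
  have hu2 : u * (1 + t2) = 1 := by rw [hrec1]; field_simp
  have ht2lt : t2 < (s-1)/2 := by nlinarith [hud, hu2, hs]
  have hak2 : 2 ≤ a (k+2) := by
    by_contra hne
    have h1' : a (k+2) = 1 := by have := ha (k+2); omega
    have hA2 : ((a (k+2):ℝ)) = 1 := by rw [h1']; norm_num
    rw [hA2] at hrec2
    have hden3 : (0:ℝ) < 1 + t3 := by linarith
    have hge : (1:ℝ)/2 ≤ t2 := by
      rw [hrec2, div_le_div_iff₀ (by norm_num) hden3]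
      linarith
    nlinarith [ht2lt, hs]
  exact ⟨hak1, hak2⟩

lemma gstep (ha : ∀ n, 1 ≤ a n) {N m : ℕ} (hm : N ≤ m)
    (hall : ∀ k, N ≤ k → 2 - Real.sqrt 3 < cfT a k * cfV a k) (h2m : 2 ≤ a m) :
    9 * (cfT a (m+1) - (Real.sqrt 3 - 1)) ≤ cfT a (m+3) - (Real.sqrt 3 - 1) := by
  set s := Real.sqrt 3 with hsdef
  have hs : s^2 = 3 := Real.sq_sqrt (by norm_num)
  have hs0 : (0:ℝ) ≤ s := Real.sqrt_nonneg 3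
  have hsl : (1.7:ℝ) < s := by nlinarith
  have hsu : s < (1.8:ℝ) := by nlinarith
  obtain ⟨hak1, hak2⟩ := forced_lemma ha hm hall h2m
  obtain ⟨hak2e, ht3d, _⟩ := pair_lemma ha (by omega : N ≤ m + 2) hall hak2
  set t1 := cfT a (m+1) with ht1
  set t2 := cfT a (m+2) with ht2
  set T := cfT a (m+3) with hT
  have hT0 : 0 ≤ T := cfT_nonneg ha (m+3)
  have hrec1 : t1 = 1 / ((a (m+1):ℝ) + t2) := cfT_rec ha (m+1)
  have hrec2 : t2 = 1 / ((a (m+2):ℝ) + T) := cfT_rec ha (m+2)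
  have hA1 : ((a (m+1):ℝ)) = 1 := by rw [hak1]; norm_num
  have hA2 : ((a (m+2):ℝ)) = 2 := by rw [hak2e]; norm_num
  rw [hA1] at hrec1
  rw [hA2] at hrec2
  have hd2 : (0:ℝ) < 2 + T := by linarith
  have ht1e : t1 = (2+T)/(3+T) := by
    rw [hrec1, hrec2]
    rw [div_eq_div_iff]
    · field_simp
      ring
    · have h := cfT_nonneg ha (m+2)
      rw [hrec2] at *
      positivity
    · linarith
  have hd3 : (0:ℝ) < 3 + T := by linarith
  -- T - d where d = s - 1 ; goal: 9*(t1 - (s-1)) ≤ T - (s-1)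
  have key : 9 * ((2+T) - (s-1)*(3+T)) ≤ (T - (s-1)) * (3+T) := by
    nlinarith [hs, mul_pos (sub_pos.mpr ht3d) (show (0:ℝ) < T + 9*s - 15 by nlinarith [ht3d]), ht3d]
  have h1 : 9 * (t1 - (s-1)) = 9 * ((2+T) - (s-1)*(3+T)) / (3+T) := by
    rw [ht1e]; field_simp
  rw [h1, div_le_iff₀ hd3]
  calc 9 * ((2+T) - (s-1)*(3+T)) ≤ (T - (s-1)) * (3+T) := key
    _ = (T - (s-1)) * (3+T) := rfl
end

/-- if bₖ ≥ 2 infinitely often then liminf (1 + tₖvₖ) ≤ 3 − √3. -/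
theorem stmt14 (a : ℕ → ℕ) (ha : ∀ n, 1 ≤ a n)
    (h2 : ∀ N : ℕ, ∃ k, N ≤ k ∧ 2 ≤ a k) :
    Filter.liminf (fun k => 1 + cfT a k * cfV a k) Filter.atTop ≤ 3 - Real.sqrt 3 := by
  have hs : (Real.sqrt 3)^2 = 3 := Real.sq_sqrt (by norm_num)
  have hs0 : (0:ℝ) ≤ Real.sqrt 3 := Real.sqrt_nonneg 3
  have hsl : (1.7:ℝ) < Real.sqrt 3 := by nlinarith
  have key : ∀ N, ∃ k, N ≤ k ∧ cfT a k * cfV a k ≤ 2 - Real.sqrt 3 := by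
    intro N
    by_contra hcon
    push_neg at hcon
    obtain ⟨k₀, hk₀N, hk₀2⟩ := h2 N
    have chain : ∀ j, 2 ≤ a (k₀ + 2*j) := by
      intro j
      induction j with
      | zero => simpa using hk₀2
      | succ j ihj =>
        have hge : N ≤ k₀ + 2*j := le_trans hk₀N (Nat.le_add_right _ _)
        have h := (forced_lemma ha hge hcon ihj).2
        have e : k₀ + 2*j + 2 = k₀ + 2*(j+1) := by ring
        rwa [e] at h
    have hdpos : ∀ j, Real.sqrt 3 - 1 < cfT a (k₀ + 2*j + 1) := fun j =>
      (pair_lemma ha (le_trans hk₀N (Nat.le_add_right _ _)) hcon (chain j)).2.1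
    have hstep : ∀ j, 9 * (cfT a (k₀ + 2*j + 1) - (Real.sqrt 3 - 1))
        ≤ cfT a (k₀ + 2*(j+1) + 1) - (Real.sqrt 3 - 1) := by
      intro j
      have h := gstep ha (le_trans hk₀N (Nat.le_add_right _ _)) hcon (chain j)
      have e : k₀ + 2*j + 3 = k₀ + 2*(j+1) + 1 := by ring
      rwa [e] at h
    have grow : ∀ j, 9^j * (cfT a (k₀ + 1) - (Real.sqrt 3 - 1))
        ≤ cfT a (k₀ + 2*j + 1) - (Real.sqrt 3 - 1) := by
      intro j
      induction j with
      | zero => norm_num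
      | succ j ihj =>
        have h := hstep j
        calc 9^(j+1) * (cfT a (k₀ + 1) - (Real.sqrt 3 - 1))
            = 9 * (9^j * (cfT a (k₀ + 1) - (Real.sqrt 3 - 1))) := by ring
          _ ≤ 9 * (cfT a (k₀ + 2*j + 1) - (Real.sqrt 3 - 1)) := by
              have : (0:ℝ) ≤ 9 := by norm_num
              nlinarith [ihj]
          _ ≤ cfT a (k₀ + 2*(j+1) + 1) - (Real.sqrt 3 - 1) := h
    set δ := cfT a (k₀ + 1) - (Real.sqrt 3 - 1) with hδ
    have hδ0 : 0 < δ := by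
      have h := hdpos 0
      simp only [Nat.mul_zero, Nat.add_zero] at h
      simp only [hδ]
      linarith
    obtain ⟨n, hn⟩ := pow_unbounded_of_one_lt δ⁻¹ (by norm_num : (1:ℝ) < 9)
    have h1 : 1 < 9^n * δ := by
      have := mul_lt_mul_of_pos_right hn hδ0
      rwa [inv_mul_cancel₀ hδ0.ne'] at this
    have h2' : cfT a (k₀ + 2*n + 1) - (Real.sqrt 3 - 1) < 1 := by
      have := cfT_le_one ha (k₀ + 2*n + 1)
      linarith
    have := grow n
    linarith
  have freq : ∃ᶠ k in Filter.atTop, (fun k => 1 + cfT a k * cfV a k) k ≤ 3 - Real.sqrt 3 := by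
    rw [Filter.frequently_atTop]
    intro N
    obtain ⟨k, hk1, hk2⟩ := key N
    exact ⟨k, hk1, by simpa using (by linarith : 1 + cfT a k * cfV a k ≤ 3 - Real.sqrt 3)⟩
  have hbdd : Filter.IsBoundedUnder (· ≥ ·) Filter.atTop (fun k => 1 + cfT a k * cfV a k) := by
    refine ⟨1, Filter.eventually_map.mpr (Filter.Eventually.of_forall fun k => ?_)⟩
    have := mul_nonneg (cfT_nonneg ha k) (cfV_nonneg (a := a) k)
    simp only [ge_iff_le]
    linarith
  exact Filter.liminf_le_of_frequently_le freq hbdd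
end

section
/- The Lagrange spectrum, viewed as the set of finite values of limsup_{k→∞}(b_{k+1} + t_{k+1} + vₖ) over irrational α = [0; b₁, b₂, ...] (with tₖ, vₖ the forward and backward tails), is a closed subset of ℝ. -/
/-!
Let `xₙ → x` with `xₙ` in the spectrum, realised by sequences `bₙ`. Pass to a subsequence along
which cluster points of the tail pairs `(tₖ, vₖ)` of the `bₙ` converge to some `q`. In each `bₙ`
cut a long window that starts and ends where the tails are close to `q`, on which the terms stay
below `xₙ + o(1)` and once come close to `xₙ`, and concatenate the windows. Inside a window the
terms of the new sequence differ from those of `bₙ` by `o(1)`: the tails are obtained from the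
tails at the two ends of the window through continued fraction maps, which are 1-Lipschitz and
contract geometrically along long words, and at every seam the tails on both sides are close to
`q`. So the new sequence has limsup `x`.
-/

open Filter

/-- The Lagrange spectrum: finite values of limsup (b_{k+1} + t_{k+1} + vₖ). -/
noncomputable def lagrangeSpectrum : Set ℝ :=
  {x | ∃ a : ℕ → ℕ, (∀ n, 1 ≤ a n) ∧
    Filter.limsup (fun k => (((a k : ℝ) + cfT a (k + 1) + cfV a k : ℝ) : EReal))
      Filter.atTop = (x : EReal)}

/-- `cfFinWith l x = [0; l₀, l₁, …, l_{n-1} + x]`. -/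
noncomputable def cfFinWith : List ℕ → ℝ → ℝ
  | [], x => x
  | a :: l, x => 1 / ((a : ℝ) + cfFinWith l x)

theorem cfFin_eq_cfFinWith_zero (l : List ℕ) : cfFin l = cfFinWith l 0 := by
  induction l with
  | nil => rfl
  | cons a l ih => simp [cfFin, cfFinWith, ih]

theorem cfFinWith_append (l m : List ℕ) (x : ℝ) :
    cfFinWith (l ++ m) x = cfFinWith l (cfFinWith m x) := by
  induction l with
  | nil => rfl
  | cons a l ih => simp [cfFinWith, ih]

theorem cfFinWith_nonneg (l : List ℕ) {x : ℝ} (hx : 0 ≤ x) : 0 ≤ cfFinWith l x := by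
  induction l with
  | nil => exact hx
  | cons a l ih => simp only [cfFinWith]; positivity

theorem cfFinWith_mem_Icc {l : List ℕ} (hl : ∀ c ∈ l, 1 ≤ c) {x : ℝ}
    (hx : x ∈ Set.Icc (0 : ℝ) 1) : cfFinWith l x ∈ Set.Icc (0 : ℝ) 1 := by
  induction l with
  | nil => exact hx
  | cons a l ih =>
    have ha : (1 : ℝ) ≤ a := by exact_mod_cast hl a List.mem_cons_self
    have hu := (ih fun c hc => hl c (List.mem_cons_of_mem a hc)).1
    simp only [cfFinWith]
    exact ⟨by positivity, by rw [div_le_one (by positivity)]; linarith⟩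

theorem abs_inv_add_sub_inv_add {a u v : ℝ} (hu : 0 < a + u) (hv : 0 < a + v) :
    |1 / (a + u) - 1 / (a + v)| = |u - v| / ((a + u) * (a + v)) := by
  rw [div_sub_div _ _ hu.ne' hv.ne', abs_div, abs_of_pos (mul_pos hu hv), abs_sub_comm u v]
  ring_nf

theorem abs_cfFinWith_sub_le {l : List ℕ} (hl : ∀ c ∈ l, 1 ≤ c) {x y : ℝ} (hx : 0 ≤ x)
    (hy : 0 ≤ y) : |cfFinWith l x - cfFinWith l y| ≤ |x - y| := by
  induction l with
  | nil => rfl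
  | cons a l ih =>
    have ha : (1 : ℝ) ≤ a := by exact_mod_cast hl a List.mem_cons_self
    have hu := cfFinWith_nonneg l hx
    have hv := cfFinWith_nonneg l hy
    simp only [cfFinWith]
    rw [abs_inv_add_sub_inv_add (by positivity) (by positivity)]
    exact (div_le_self (abs_nonneg _) (by nlinarith)).trans
      (ih fun c hc => hl c (List.mem_cons_of_mem a hc))

theorem abs_cfFinWith_pair_sub_le {a b : ℕ} (ha : 1 ≤ a) (hb : 1 ≤ b) {u v : ℝ} (hu : 0 ≤ u)
    (hv : 0 ≤ v) : |cfFinWith [a, b] u - cfFinWith [a, b] v| ≤ |u - v| / 4 := by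
  have ha : (1 : ℝ) ≤ a := by exact_mod_cast ha
  have hb : (1 : ℝ) ≤ b := by exact_mod_cast hb
  have key : ∀ w : ℝ, cfFinWith [a, b] w = 1 / (a + 1 / (b + w)) := fun w => by
    simp [cfFinWith]
  rw [key u, key v, abs_inv_add_sub_inv_add (by positivity) (by positivity),
    abs_inv_add_sub_inv_add (by positivity) (by positivity), div_div]
  -- `(b + w) * (a + 1 / (b + w)) = a * (b + w) + 1 ≥ 2`
  have hprod : ∀ w : ℝ, 0 ≤ w → 2 ≤ (b + w) * (a + 1 / (b + w)) := fun w hw => by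
    rw [mul_add, mul_one_div_cancel (by positivity)]; nlinarith
  refine div_le_div_of_nonneg_left (abs_nonneg _) (by norm_num) ?_
  nlinarith [hprod u hu, hprod v hv]

theorem abs_cfFinWith_sub_le_two_mul_half_pow_mul : ∀ {l : List ℕ}, (∀ c ∈ l, 1 ≤ c) → ∀ {x y : ℝ},
    x ∈ Set.Icc (0 : ℝ) 1 → y ∈ Set.Icc (0 : ℝ) 1 →
    |cfFinWith l x - cfFinWith l y| ≤ 2 * (1 / 2) ^ l.length * |x - y|
  | [], _, x, y, _, _ => by simp only [cfFinWith, List.length_nil]; linarith [abs_nonneg (x - y)]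
  | [a], hl, x, y, hx, hy => by
    simpa using abs_cfFinWith_sub_le hl hx.1 hy.1
  | a :: b :: l, hl, x, y, hx, hy => by
    have hl' : ∀ c ∈ l, 1 ≤ c := fun c hc => hl c (by simp [hc])
    have ih := abs_cfFinWith_sub_le_two_mul_half_pow_mul hl' hx hy
    have h2 := abs_cfFinWith_pair_sub_le (hl a (by simp)) (hl b (by simp))
      (cfFinWith_mem_Icc hl' hx).1 (cfFinWith_mem_Icc hl' hy).1
    change |cfFinWith [a, b] (cfFinWith l x) - cfFinWith [a, b] (cfFinWith l y)|
      ≤ 2 * (1 / 2) ^ (l.length + 2) * |x - y|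
    rw [pow_add]
    linarith

theorem abs_cfFinWith_sub_le_two_mul_half_pow {l : List ℕ} (hl : ∀ c ∈ l, 1 ≤ c) {x y : ℝ}
    (hx : x ∈ Set.Icc (0 : ℝ) 1) (hy : y ∈ Set.Icc (0 : ℝ) 1) :
    |cfFinWith l x - cfFinWith l y| ≤ 2 * (1 / 2) ^ l.length := by
  have hxy : |x - y| ≤ 1 := abs_sub_le_iff.2 ⟨by linarith [hx.2, hy.1], by linarith [hx.1, hy.2]⟩
  calc |cfFinWith l x - cfFinWith l y| ≤ 2 * (1 / 2) ^ l.length * |x - y| :=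
        abs_cfFinWith_sub_le_two_mul_half_pow_mul hl hx hy
    _ ≤ 2 * (1 / 2) ^ l.length := mul_le_of_le_one_right (by positivity) hxy

def window (a : ℕ → ℕ) (m d : ℕ) : List ℕ := (List.range d).map fun i => a (m + i)

section Tails

variable {a : ℕ → ℕ}

theorem one_le_of_mem_window (ha : ∀ n, 1 ≤ a n) {m d : ℕ} : ∀ c ∈ window a m d, 1 ≤ c := by
  simp only [window, List.mem_map]
  rintro _ ⟨i, -, rfl⟩
  exact ha _

theorem window_congr {a' : ℕ → ℕ} {m m' d : ℕ} (h : ∀ i < d, a (m + i) = a' (m' + i)) :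
    window a m d = window a' m' d :=
  List.map_congr_left fun i hi => h i (List.mem_range.1 hi)

theorem window_add (m d d' : ℕ) : window a m (d + d') = window a m d ++ window a (m + d) d' := by
  simp only [window, List.range_add, List.map_append, List.map_map, Function.comp_def, add_assoc]

theorem cfFin_ofFn_eq_cfFinWith_window (n : ℕ) :
    cfFin (List.ofFn fun i : Fin n => a i) = cfFinWith (window a 0 n) 0 := by
  rw [cfFin_eq_cfFinWith_zero]
  congr 1
  apply List.ext_getElem <;> simp [window]

theorem cauchySeq_cfFinWith_window (ha : ∀ n, 1 ≤ a n) :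
    CauchySeq fun n => cfFinWith (window a 0 n) 0 := by
  refine cauchySeq_of_le_geometric (1 / 2) 2 (by norm_num) fun n => ?_
  have h := abs_cfFinWith_sub_le_two_mul_half_pow (one_le_of_mem_window ha (m := 0) (d := n))
    (x := 0) (by simp) (cfFinWith_mem_Icc (one_le_of_mem_window ha (m := 0 + n) (d := 1)) (x := 0)
      (by simp))
  rwa [← cfFinWith_append, ← window_add, show (window a 0 n).length = n by simp [window]] at h

theorem tendsto_cfFinWith_window_cfInf (ha : ∀ n, 1 ≤ a n) :
    Tendsto (fun n => cfFinWith (window a 0 n) 0) atTop (nhds (cfInf a)) := by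
  obtain ⟨L, hL⟩ := cauchySeq_tendsto_of_complete (cauchySeq_cfFinWith_window ha)
  have hlim : cfInf a = L := by
    simp only [cfInf, cfFin_ofFn_eq_cfFinWith_window]
    exact hL.limUnder_eq
  rwa [hlim]

theorem cfInf_mem_Icc (ha : ∀ n, 1 ≤ a n) : cfInf a ∈ Set.Icc (0 : ℝ) 1 :=
  isClosed_Icc.mem_of_tendsto (tendsto_cfFinWith_window_cfInf ha)
    (Eventually.of_forall fun _ => cfFinWith_mem_Icc (one_le_of_mem_window ha) (by simp))

theorem cfInf_eq_cfFinWith (ha : ∀ n, 1 ≤ a n) (d : ℕ) :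
    cfInf a = cfFinWith (window a 0 d) (cfInf fun i => a (d + i)) := by
  have ha' : ∀ n, 1 ≤ a (d + n) := fun n => ha _
  have hshift : Tendsto (fun n => cfFinWith (window a 0 (d + n)) 0) atTop (nhds (cfInf a)) :=
    (tendsto_cfFinWith_window_cfInf ha).comp
      (tendsto_atTop_mono (fun n => Nat.le_add_left n d) tendsto_id)
  refine tendsto_nhds_unique hshift ?_
  have hw : ∀ n, window a (0 + d) n = window (fun i => a (d + i)) 0 n := fun n => by
    simp [window]
  simp only [window_add, cfFinWith_append, hw]
  refine tendsto_iff_dist_tendsto_zero.2 (squeeze_zero (fun _ => dist_nonneg) (fun n => ?_)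
    (tendsto_iff_dist_tendsto_zero.1 (tendsto_cfFinWith_window_cfInf ha')))
  rw [Real.dist_eq, Real.dist_eq]
  exact abs_cfFinWith_sub_le (one_le_of_mem_window ha)
    (cfFinWith_mem_Icc (one_le_of_mem_window ha' (m := 0) (d := n)) (x := 0) (by simp)).1
    (cfInf_mem_Icc ha').1

theorem cfT_mem_Icc (ha : ∀ n, 1 ≤ a n) (k : ℕ) : cfT a k ∈ Set.Icc (0 : ℝ) 1 :=
  cfInf_mem_Icc fun _ => ha _

theorem cfV_mem_Icc (ha : ∀ n, 1 ≤ a n) (k : ℕ) : cfV a k ∈ Set.Icc (0 : ℝ) 1 := by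
  rw [cfV, cfFin_eq_cfFinWith_zero]
  refine cfFinWith_mem_Icc ?_ (by simp)
  simp only [List.mem_map]
  rintro _ ⟨i, -, rfl⟩
  exact ha i

theorem cfT_eq_cfFinWith (ha : ∀ n, 1 ≤ a n) (k d : ℕ) :
    cfT a k = cfFinWith (window a k d) (cfT a (k + d)) := by
  rw [cfT, cfInf_eq_cfFinWith (fun _ => ha _) d, cfT]
  congr 1
  · exact window_congr fun i _ => by rw [zero_add, add_comm]
  · exact congrArg cfInf (funext fun i => congrArg a (by ring))

theorem cfV_add (m d : ℕ) : cfV a (m + d) = cfFinWith (window a m d).reverse (cfV a m) := by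
  simp only [cfV, cfFin_eq_cfFinWith_zero, ← cfFinWith_append, window, List.range_add,
    List.reverse_append, List.map_append, List.map_reverse, List.map_map, Function.comp_def]

end Tails

/-- `lagrangeTerm a k = b_{k+1} + t_{k+1} + v_k` for `α = [0; a 0, a 1, …]`. -/
noncomputable def lagrangeTerm (a : ℕ → ℕ) (k : ℕ) : ℝ := a k + cfT a (k + 1) + cfV a k

section Agree

variable {a a' : ℕ → ℕ} {m m' d : ℕ}

theorem abs_cfT_sub_le_of_agree (ha : ∀ n, 1 ≤ a n) (ha' : ∀ n, 1 ≤ a' n)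
    (h : ∀ i < d, a (m + i) = a' (m' + i)) : |cfT a m - cfT a' m'| ≤ 2 * (1 / 2) ^ d := by
  rw [cfT_eq_cfFinWith ha m d, cfT_eq_cfFinWith ha' m' d, window_congr h]
  simpa [window] using abs_cfFinWith_sub_le_two_mul_half_pow (one_le_of_mem_window ha')
    (cfT_mem_Icc ha _) (cfT_mem_Icc ha' _)

theorem abs_cfV_sub_le_of_agree (ha : ∀ n, 1 ≤ a n) (ha' : ∀ n, 1 ≤ a' n)
    (h : ∀ i < d, a (m + i) = a' (m' + i)) :
    |cfV a (m + d) - cfV a' (m' + d)| ≤ 2 * (1 / 2) ^ d := by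
  rw [cfV_add, cfV_add, window_congr h]
  simpa [window] using abs_cfFinWith_sub_le_two_mul_half_pow (l := (window a' m' d).reverse)
    (by simpa using one_le_of_mem_window ha') (cfV_mem_Icc ha _) (cfV_mem_Icc ha' _)

theorem abs_lagrangeTerm_sub_le_of_agree (ha : ∀ n, 1 ≤ a n) (ha' : ∀ n, 1 ≤ a' n)
    (h : ∀ i < d, a (m + i) = a' (m' + i)) {i : ℕ} (hi : i < d) :
    |lagrangeTerm a (m + i) - lagrangeTerm a' (m' + i)|
      ≤ |cfT a (m + d) - cfT a' (m' + d)| + |cfV a m - cfV a' m'| := by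
  obtain ⟨r, rfl⟩ := Nat.exists_eq_add_of_lt hi
  have hT : |cfT a (m + i + 1) - cfT a' (m' + i + 1)|
      ≤ |cfT a (m + (i + r + 1)) - cfT a' (m' + (i + r + 1))| := by
    rw [show m + (i + r + 1) = m + i + 1 + r by ring,
      show m' + (i + r + 1) = m' + i + 1 + r by ring,
      cfT_eq_cfFinWith ha (m + i + 1) r, cfT_eq_cfFinWith ha' (m' + i + 1) r,
      window_congr (a' := a') (m' := m' + i + 1) fun t ht => by
        simpa only [add_assoc] using h (i + 1 + t) (by omega)]
    exact abs_cfFinWith_sub_le (one_le_of_mem_window ha') (cfT_mem_Icc ha _).1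
      (cfT_mem_Icc ha' _).1
  have hV : |cfV a (m + i) - cfV a' (m' + i)| ≤ |cfV a m - cfV a' m'| := by
    rw [cfV_add, cfV_add, window_congr fun t ht => h t (by omega)]
    exact abs_cfFinWith_sub_le (by simpa using one_le_of_mem_window ha')
      (cfV_mem_Icc ha _).1 (cfV_mem_Icc ha' _).1
  have hsplit : lagrangeTerm a (m + i) - lagrangeTerm a' (m' + i)
      = (cfT a (m + i + 1) - cfT a' (m' + i + 1)) + (cfV a (m + i) - cfV a' (m' + i)) := by
    simp only [lagrangeTerm, h i hi]
    ring
  rw [hsplit]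
  exact (abs_add_le _ _).trans (add_le_add hT hV)

end Agree

theorem limsup_coe_eq_coe_iff {α : Type*} {l : Filter α} {f : α → ℝ} {x : ℝ} :
    limsup (fun k => (f k : EReal)) l = x ↔
      (∀ ε > 0, ∀ᶠ k in l, f k ≤ x + ε) ∧ ∀ ε > 0, ∃ᶠ k in l, x - ε ≤ f k := by
  rw [le_antisymm_iff, limsup_le_iff', le_limsup_iff']
  refine and_congr ⟨fun h ε hε => ?_, fun h y hy => ?_⟩ ⟨fun h ε hε => ?_, fun h y hy => ?_⟩
  · exact (h (x + ε : ℝ) (by exact_mod_cast lt_add_of_pos_right x hε)).mono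
      fun k hk => by exact_mod_cast hk
  · obtain ⟨r, hxr, hry⟩ := EReal.lt_iff_exists_real_btwn.1 hy
    have hxr : x < r := by exact_mod_cast hxr
    exact (h (r - x) (by linarith)).mono fun k hk =>
      (EReal.coe_le_coe_iff.2 (by linarith)).trans hry.le
  · exact (h (x - ε : ℝ) (by exact_mod_cast sub_lt_self x hε)).mono
      fun k hk => by exact_mod_cast hk
  · obtain ⟨r, hyr, hrx⟩ := EReal.lt_iff_exists_real_btwn.1 hy
    have hrx : r < x := by exact_mod_cast hrx
    exact (h (x - r) (by linarith)).mono fun k hk =>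
      hyr.le.trans (EReal.coe_le_coe_iff.2 (by linarith))

def blockStart (L : ℕ → ℕ) (j : ℕ) : ℕ := ∑ t ∈ Finset.range j, L t

section Blocks

variable {L : ℕ → ℕ}

theorem blockStart_succ (j : ℕ) : blockStart L (j + 1) = blockStart L j + L j :=
  Finset.sum_range_succ _ _

theorem blockStart_mono : Monotone (blockStart L) :=
  monotone_nat_of_le_succ fun j => by rw [blockStart_succ]; omega

theorem le_blockStart (hL : ∀ j, 0 < L j) (j : ℕ) : j ≤ blockStart L j := by
  induction j with
  | zero => exact Nat.zero_le _
  | succ j ih => rw [blockStart_succ]; have := hL j; omega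

theorem exists_block (hL : ∀ j, 0 < L j) (k : ℕ) : ∃ j, ∃ i < L j, k = blockStart L j + i := by
  induction k with
  | zero => exact ⟨0, 0, hL 0, rfl⟩
  | succ k ih =>
    obtain ⟨j, i, hi, rfl⟩ := ih
    by_cases hi' : i + 1 < L j
    · exact ⟨j, i + 1, hi', by omega⟩
    · exact ⟨j + 1, 0, hL _, by rw [blockStart_succ]; omega⟩

theorem eq_of_blockStart_add_eq {j j' i i' : ℕ} (hi : i < L j) (hi' : i' < L j')
    (h : blockStart L j + i = blockStart L j' + i') : j = j' := by
  by_contra hne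
  rcases Nat.lt_or_gt_of_ne hne with hlt | hlt
  · have := blockStart_mono (L := L) (Nat.succ_le_of_lt hlt)
    rw [blockStart_succ] at this
    omega
  · have := blockStart_mono (L := L) (Nat.succ_le_of_lt hlt)
    rw [blockStart_succ] at this
    omega

theorem exists_glue {c : ℕ → ℕ → ℕ} (hc : ∀ j n, 1 ≤ c j n) (s : ℕ → ℕ) (hL : ∀ j, 0 < L j) :
    ∃ A : ℕ → ℕ, (∀ n, 1 ≤ A n) ∧ ∀ j, ∀ i < L j, A (blockStart L j + i) = c j (s j + i) := by
  choose J I hI hk using exists_block hL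
  refine ⟨fun k => c (J k) (s (J k) + I k), fun k => hc _ _, fun j i hi => ?_⟩
  have hk := hk (blockStart L j + i)
  have hJ := eq_of_blockStart_add_eq (hI _) hi hk.symm
  have hI' : I (blockStart L j + i) = i := by rw [hJ] at hk; omega
  simp only [hJ, hI']

theorem limsup_coe_eq_of_blocks {f : ℕ → ℝ} (hL : ∀ j, 0 < L j) {x : ℝ} {ρ : ℕ → ℝ}
    (hρ : Tendsto ρ atTop (nhds 0))
    (hup : ∀ j, ∀ i < L (j + 1), f (blockStart L (j + 1) + i) ≤ x + ρ j)
    (hlow : ∀ j, ∃ i < L (j + 1), x - ρ j ≤ f (blockStart L (j + 1) + i)) :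
    limsup (fun k => (f k : EReal)) atTop = x := by
  refine limsup_coe_eq_coe_iff.2 ⟨fun ε hε => ?_, fun ε hε => ?_⟩ <;>
    obtain ⟨J, hJ⟩ := eventually_atTop.1 (hρ.eventually (ge_mem_nhds hε))
  · refine eventually_atTop.2 ⟨blockStart L (J + 1), fun k hk => ?_⟩
    obtain ⟨j, i, hi, rfl⟩ := exists_block hL k
    have hj : J + 1 ≤ j := not_lt.1 fun hj => by
      have := blockStart_mono (L := L) (Nat.succ_le_of_lt hj)
      rw [blockStart_succ] at this
      omega
    obtain ⟨j, rfl⟩ := Nat.exists_eq_add_of_le' hj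
    rw [← add_assoc] at hi ⊢
    linarith [hup (j + J) i hi, hJ (j + J) (Nat.le_add_left J j)]
  · refine frequently_atTop.2 fun K => ?_
    obtain ⟨i, hi, hf⟩ := hlow (max J K)
    refine ⟨_, ?_, le_trans ?_ hf⟩
    · linarith [le_blockStart hL (max J K + 1), le_max_right J K]
    · linarith [hJ (max J K) (le_max_left J K)]

end Blocks

structure IsLagrangeWindow (a : ℕ → ℕ) (x : ℝ) (q : ℝ × ℝ) (δ : ℝ) (s p e : ℕ) : Prop where
  le_peak : s ≤ p
  peak_lt : p < e
  le_of_mem : ∀ k, s ≤ k → k < e → lagrangeTerm a k ≤ x + δ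
  peak_ge : x - δ ≤ lagrangeTerm a p
  cfT_start : |cfT a s - q.1| ≤ δ
  cfV_start : |cfV a s - q.2| ≤ δ
  cfT_end : |cfT a e - q.1| ≤ δ
  cfV_end : |cfV a e - q.2| ≤ δ

namespace IsLagrangeWindow

variable {a : ℕ → ℕ} {x : ℝ} {q : ℝ × ℝ} {δ : ℝ} {s p e : ℕ}

theorem weaken (hw : IsLagrangeWindow a x q δ s p e) {x' : ℝ} {q' : ℝ × ℝ} {δ' : ℝ}
    (hx : |x - x'| + δ ≤ δ') (hq : dist q q' + δ ≤ δ') : IsLagrangeWindow a x' q' δ' s p e := by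
  have hxx := abs_le.1 (show |x - x'| ≤ δ' - δ by linarith)
  have hq1 : |q.1 - q'.1| ≤ δ' - δ := by
    have := le_max_left (dist q.1 q'.1) (dist q.2 q'.2)
    rw [← Prod.dist_eq, Real.dist_eq] at this
    linarith
  have hq2 : |q.2 - q'.2| ≤ δ' - δ := by
    have := le_max_right (dist q.1 q'.1) (dist q.2 q'.2)
    rw [← Prod.dist_eq, Real.dist_eq] at this
    linarith
  exact ⟨hw.le_peak, hw.peak_lt, fun k hsk hke => by linarith [hw.le_of_mem k hsk hke],
    by linarith [hw.peak_ge], by linarith [abs_sub_le (cfT a s) q.1 q'.1, hw.cfT_start],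
    by linarith [abs_sub_le (cfV a s) q.2 q'.2, hw.cfV_start],
    by linarith [abs_sub_le (cfT a e) q.1 q'.1, hw.cfT_end],
    by linarith [abs_sub_le (cfV a e) q.2 q'.2, hw.cfV_end]⟩

variable {A : ℕ → ℕ} {m L : ℕ}

theorem abs_cfT_sub_le (hw : IsLagrangeWindow a x q δ s p (s + L)) (hA : ∀ n, 1 ≤ A n)
    (ha : ∀ n, 1 ≤ a n) (h : ∀ i < L, A (m + i) = a (s + i)) :
    |cfT A m - q.1| ≤ 2 * (1 / 2) ^ L + δ := by
  linarith [abs_cfT_sub_le_of_agree hA ha h, abs_sub_le (cfT A m) (cfT a s) q.1, hw.cfT_start]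

theorem abs_cfV_sub_le (hw : IsLagrangeWindow a x q δ s p (s + L)) (hA : ∀ n, 1 ≤ A n)
    (ha : ∀ n, 1 ≤ a n) (h : ∀ i < L, A (m + i) = a (s + i)) :
    |cfV A (m + L) - q.2| ≤ 2 * (1 / 2) ^ L + δ := by
  linarith [abs_cfV_sub_le_of_agree hA ha h, abs_sub_le (cfV A (m + L)) (cfV a (s + L)) q.2,
    hw.cfV_end]

theorem abs_lagrangeTerm_sub_le (hw : IsLagrangeWindow a x q δ s p (s + L))
    (hA : ∀ n, 1 ≤ A n) (ha : ∀ n, 1 ≤ a n) (h : ∀ i < L, A (m + i) = a (s + i)) {i : ℕ}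
    (hi : i < L) : |lagrangeTerm A (m + i) - lagrangeTerm a (s + i)|
      ≤ |cfT A (m + L) - q.1| + |cfV A m - q.2| + 2 * δ := by
  linarith [abs_lagrangeTerm_sub_le_of_agree hA ha h hi,
    abs_sub_le (cfT A (m + L)) q.1 (cfT a (s + L)), abs_sub_comm q.1 (cfT a (s + L)), hw.cfT_end,
    abs_sub_le (cfV A m) q.2 (cfV a s), abs_sub_comm q.2 (cfV a s), hw.cfV_start]

end IsLagrangeWindow

theorem exists_isLagrangeWindow {a : ℕ → ℕ} {y : ℝ}
    (h : limsup (fun k => (lagrangeTerm a k : EReal)) atTop = y) {q : ℝ × ℝ}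
    (hq : MapClusterPt q atTop fun k => (cfT a k, cfV a k)) {ε : ℝ} (hε : 0 < ε) (d : ℕ) :
    ∃ s p e, s + d ≤ e ∧ IsLagrangeWindow a y q ε s p e := by
  have hnear : ∀ k, dist (cfT a k, cfV a k) q < ε → |cfT a k - q.1| ≤ ε ∧ |cfV a k - q.2| ≤ ε :=
    fun k hk => by
      rw [Prod.dist_eq, Real.dist_eq, Real.dist_eq, max_lt_iff] at hk
      exact ⟨hk.1.le, hk.2.le⟩
  have hfreq := mapClusterPt_iff_frequently.1 hq _ (Metric.ball_mem_nhds q hε)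
  obtain ⟨hup, hlow⟩ := limsup_coe_eq_coe_iff.1 h
  obtain ⟨K, hK⟩ := eventually_atTop.1 (hup ε hε)
  obtain ⟨s, hsK, hs⟩ := frequently_atTop.1 hfreq K
  obtain ⟨p, hsp, hp⟩ := frequently_atTop.1 (hlow ε hε) s
  obtain ⟨e, hpe, he⟩ := frequently_atTop.1 hfreq (max (p + 1) (s + d))
  exact ⟨s, p, e, le_of_max_le_right hpe, hsp, le_of_max_le_left hpe,
    fun k hk _ => hK k (hsK.trans hk), hp, (hnear s hs).1, (hnear s hs).2, (hnear e he).1,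
    (hnear e he).2⟩

theorem exists_limsup_lagrangeTerm_eq_of_windows {c : ℕ → ℕ → ℕ} (hc : ∀ j n, 1 ≤ c j n)
    {x : ℝ} {q : ℝ × ℝ} {δ : ℕ → ℝ} (hδ : Tendsto δ atTop (nhds 0)) {s p e : ℕ → ℕ}
    (hw : ∀ j, IsLagrangeWindow (c j) x q (δ j) (s j) (p j) (e j)) (hlen : ∀ j, s j + j ≤ e j) :
    ∃ a : ℕ → ℕ, (∀ n, 1 ≤ a n) ∧ limsup (fun k => (lagrangeTerm a k : EReal)) atTop = x := by
  obtain ⟨L, hse⟩ : ∃ L : ℕ → ℕ, ∀ j, s j + L j = e j :=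
    ⟨fun j => e j - s j, fun j => Nat.add_sub_of_le ((hw j).le_peak.trans (hw j).peak_lt.le)⟩
  simp only [← hse] at hw hlen
  have hsp : ∀ j, s j ≤ p j ∧ p j < s j + L j := fun j => ⟨(hw j).le_peak, (hw j).peak_lt⟩
  have hL : ∀ j, 0 < L j := fun j => by have := hsp j; omega
  have hLj : ∀ j, j ≤ L j := fun j => by have := hlen j; omega
  obtain ⟨A, hA, hagree⟩ := exists_glue hc s hL
  -- inside block `j + 1`, compare with `c (j + 1)` using the seams with blocks `j` and `j + 2`
  set η := fun j => 2 * (1 / 2 : ℝ) ^ L j + δ j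
  have hcomp : ∀ j, ∀ i < L (j + 1), |lagrangeTerm A (blockStart L (j + 1) + i)
      - lagrangeTerm (c (j + 1)) (s (j + 1) + i)| ≤ η (j + 2) + η j + 2 * δ (j + 1) := by
    intro j i hi
    have h := (hw (j + 1)).abs_lagrangeTerm_sub_le hA (hc _) (hagree (j + 1)) hi
    have hT := (hw (j + 2)).abs_cfT_sub_le hA (hc _) (hagree (j + 2))
    have hV := (hw j).abs_cfV_sub_le hA (hc _) (hagree j)
    rw [← blockStart_succ] at h hV
    linarith
  refine ⟨A, hA, limsup_coe_eq_of_blocks hL (ρ := fun j => η (j + 2) + η j + 3 * δ (j + 1))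
    ?_ (fun j i hi => ?_) (fun j => ⟨p (j + 1) - s (j + 1), ?_, ?_⟩)⟩
  · have hη : Tendsto η atTop (nhds 0) := by
      have hpow := (tendsto_pow_atTop_nhds_zero_of_lt_one (by norm_num : (0 : ℝ) ≤ 1 / 2)
        (by norm_num)).comp (tendsto_atTop_mono hLj tendsto_id)
      simpa [η] using (hpow.const_mul 2).add hδ
    simpa using ((hη.comp (tendsto_add_atTop_nat 2)).add hη).add
      ((hδ.comp (tendsto_add_atTop_nat 1)).const_mul 3)
  · have := (hw (j + 1)).le_of_mem (s (j + 1) + i) (by omega) (by omega)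
    linarith [(abs_le.1 (hcomp j i hi)).2]
  · have := hsp (j + 1); omega
  · have hi : p (j + 1) - s (j + 1) < L (j + 1) := by have := hsp (j + 1); omega
    have := (hw (j + 1)).peak_ge
    rw [← Nat.add_sub_of_le (hsp (j + 1)).1] at this
    linarith [(abs_le.1 (hcomp j _ hi)).1]

/-- the Lagrange spectrum is closed. -/
theorem stmt18 : IsClosed lagrangeSpectrum := by
  refine IsSeqClosed.isClosed fun {xs x} hxs hx => ?_
  choose b hb hlim using hxs
  have hK : IsCompact (Set.Icc (0 : ℝ) 1 ×ˢ Set.Icc (0 : ℝ) 1) := isCompact_Icc.prod isCompact_Icc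
  choose q hqK hq using fun n => hK.exists_mapClusterPt (f := atTop)
    (u := fun k => (cfT (b n) k, cfV (b n) k)) (tendsto_principal.2
      (Eventually.of_forall fun k => ⟨cfT_mem_Icc (hb n) k, cfV_mem_Icc (hb n) k⟩))
  obtain ⟨q₀, -, φ, hφ, hqφ⟩ := hK.tendsto_subseq hqK
  set δ := fun j => (1 / 2 : ℝ) ^ j + |xs (φ j) - x| + dist (q (φ j)) q₀
  have hδ : Tendsto δ atTop (nhds 0) := by
    have hxs := ((hx.comp hφ.tendsto_atTop).sub_const x).abs
    have hqs := tendsto_iff_dist_tendsto_zero.1 hqφ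
    simpa [δ] using ((tendsto_pow_atTop_nhds_zero_of_lt_one (by norm_num : (0 : ℝ) ≤ 1 / 2)
      (by norm_num)).add hxs).add hqs
  choose s p e hlen hw using fun j =>
    exists_isLagrangeWindow (hlim (φ j)) (hq (φ j)) (by positivity : (0 : ℝ) < (1 / 2) ^ j) j
  have hw' : ∀ j, IsLagrangeWindow (b (φ j)) x q₀ (δ j) (s j) (p j) (e j) := fun j =>
    (hw j).weaken (by simp only [δ]; linarith [dist_nonneg (x := q (φ j)) (y := q₀)])
      (by simp only [δ]; linarith [abs_nonneg (xs (φ j) - x)])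
  exact exists_limsup_lagrangeTerm_eq_of_windows (fun j => hb (φ j)) hδ hw' hlen
end
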